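/- Consider n players and m items, where each player i has an XOS valuation v_i : 2^{[m]} → ℝ≥0. Fix a selection rule g mapping each bid matrix b = (b_{ij})_{i∈[n], j∈[m]} with b_{ij} ≥ 0 to an assignment in which each item j goes to a player attaining max_i b_{ij}; the winner of item j pays her bid b_{ij}, so player i's utility is v_i(X_i(b)) − Σ_{j∈X_i(b)} b_{ij}, where X_i(b) is the set of items assigned to i. Suppose the bid matrix b is a pure Nash equilibrium: for every player i and every alternative bid vector b'_i ∈ ℝ_{≥0}^m, player i's utility at b is at least her utility at (b'_i, b_{−i}). Then Σ_{i=1}^n v_i(X_i(b)) ≥ (1/3)·max{ Σ_{i=1}^n v_i(S_i) : (S_1, …, S_n) a partition of [m] into disjoint sets }. (Simultaneous first-price item auctions with XOS bidders have price of anarchy at most 3 over pure Nash equilibria.) -/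

import Mathlib

/-- `v` is an XOS (fractionally subadditive) valuation over items indexed by `α`:
a pointwise maximum of a finite nonempty family of additive valuations with
nonnegative weights. -/
def IsXOS {α : Type*} [DecidableEq α] (v : Finset α → ℝ) : Prop :=
  ∃ L : Finset (α → ℝ), L.Nonempty ∧ (∀ w ∈ L, ∀ j, 0 ≤ w j) ∧
    ∀ X : Finset α, (∃ w ∈ L, v X = ∑ j ∈ X, w j) ∧ (∀ w ∈ L, ∑ j ∈ X, w j ≤ v X)

/-!
The bidder deviation behind the bound: a player whose XOS valuation is supported at her
optimal bundle `S` by the additive clause `w` bids `w j / 2` on the items of `S`. Every item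
she keeps yields her at least its bid as surplus, and every item of `S` she loses already had a
price (highest equilibrium bid) of at least `w j / 2`. So her equilibrium utility is at least
`v(S) / 2 - p(S)`. Summing over the players, the equilibrium payments equal the total price,
while the prices of the disjoint bundles `S i` add up to at most the total price, so the
equilibrium welfare is at least half the welfare of any partition, which is more than a third
of it since XOS values are nonnegative.
-/

open Finset Function

lemma Finset.sum_le_sum_add_sum_of_forall_notMem_le {α M : Type*} [DecidableEq α]
    [AddCommMonoid M] [PartialOrder M] [IsOrderedAddMonoid M]
    {S X : Finset α} {f p : α → M} (hf : ∀ j ∈ X, 0 ≤ f j) (hp : ∀ j ∈ S, 0 ≤ p j)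
    (h : ∀ j ∈ S, j ∉ X → f j ≤ p j) :
    ∑ j ∈ S, f j ≤ ∑ j ∈ X, f j + ∑ j ∈ S, p j := by
  rw [← sum_inter_add_sum_sdiff S X f]
  gcongr ?_ + ?_
  · exact sum_le_sum_of_subset_of_nonneg inter_subset_right fun j hj _ => hf j hj
  · calc ∑ j ∈ S \ X, f j ≤ ∑ j ∈ S \ X, p j :=
          sum_le_sum fun j hj => h j (mem_sdiff.1 hj).1 (mem_sdiff.1 hj).2
      _ ≤ ∑ j ∈ S, p j := sum_le_sum_of_subset_of_nonneg sdiff_subset fun j hj _ => hp j hj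

lemma Finset.sum_sum_le_sum_of_pairwise_disjoint {ι α M : Type*} [Fintype α]
    [AddCommMonoid M] [PartialOrder M] [IsOrderedAddMonoid M] [DecidableEq α]
    {s : Finset ι} {S : ι → Finset α} (hS : ∀ i i', i ≠ i' → Disjoint (S i) (S i'))
    {f : α → M} (hf : ∀ j, 0 ≤ f j) :
    ∑ i ∈ s, ∑ j ∈ S i, f j ≤ ∑ j, f j := by
  rw [← sum_biUnion fun i _ i' _ hne => hS i i' hne]
  exact sum_le_univ_sum_of_nonneg hf

section XOS

variable {α : Type*} [DecidableEq α] {v : Finset α → ℝ}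

lemma IsXOS.exists_supporting (hv : IsXOS v) (S : Finset α) :
    ∃ w : α → ℝ, (∀ j, 0 ≤ w j) ∧ v S = ∑ j ∈ S, w j ∧ ∀ Y, ∑ j ∈ Y, w j ≤ v Y := by
  obtain ⟨L, -, hL0, hL⟩ := hv
  obtain ⟨w, hwL, hwS⟩ := (hL S).1
  exact ⟨w, hL0 w hwL, hwS, fun Y => (hL Y).2 w hwL⟩

lemma IsXOS.nonneg (hv : IsXOS v) (S : Finset α) : 0 ≤ v S := by
  obtain ⟨w, hw0, hwS, -⟩ := hv.exists_supporting S
  exact hwS ▸ sum_nonneg fun j _ => hw0 j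

end XOS

section FirstPrice

variable {ι α : Type*} {g : (ι → α → ℝ) → α → ι} {b : ι → α → ℝ}

def SelectsHighestBid (g : (ι → α → ℝ) → α → ι) : Prop :=
  ∀ b : ι → α → ℝ, (∀ i j, 0 ≤ b i j) → ∀ j i, b i j ≤ b (g b j) j

def price (g : (ι → α → ℝ) → α → ι) (b : ι → α → ℝ) (j : α) : ℝ :=
  b (g b j) j

def wonItems [Fintype α] [DecidableEq ι] (g : (ι → α → ℝ) → α → ι) (b : ι → α → ℝ) (i : ι) :
    Finset α :=
  univ.filter fun j => g b j = i

def utility [Fintype α] [DecidableEq ι] (v : Finset α → ℝ) (g : (ι → α → ℝ) → α → ι)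
    (b : ι → α → ℝ) (i : ι) : ℝ :=
  v (wonItems g b i) - ∑ j ∈ wonItems g b i, b i j

lemma SelectsHighestBid.le_price_of_update [DecidableEq ι] (hg : SelectsHighestBid g)
    (hb : ∀ i j, 0 ≤ b i j) {i : ι} {b' : α → ℝ} (hb' : ∀ j, 0 ≤ b' j) {j : α}
    (hj : g (update b i b') j ≠ i) :
    b' j ≤ price g b j := by
  have hb'0 : ∀ k j, 0 ≤ update b i b' k j := by
    intro k j
    rcases eq_or_ne k i with rfl | hk
    · simpa using hb' j
    · simpa [update_of_ne hk] using hb k j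
  calc b' j = update b i b' i j := by simp
    _ ≤ update b i b' (g (update b i b') j) j := hg _ hb'0 j i
    _ = b (g (update b i b') j) j := by rw [update_of_ne hj]
    _ ≤ price g b j := hg b hb j _

variable [Fintype α] [DecidableEq ι]

lemma sum_payment_eq_sum_price [Fintype ι] (g : (ι → α → ℝ) → α → ι) (b : ι → α → ℝ) :
    ∑ i, ∑ j ∈ wonItems g b i, b i j = ∑ j, price g b j := by
  rw [← sum_fiberwise univ (g b) (price g b)]
  refine sum_congr rfl fun i _ => sum_congr rfl fun j hj => ?_
  rw [price, (mem_filter.1 hj).2]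

lemma sum_utility_eq [Fintype ι] (v : ι → Finset α → ℝ) (g : (ι → α → ℝ) → α → ι)
    (b : ι → α → ℝ) :
    ∑ i, utility (v i) g b i = ∑ i, v i (wonItems g b i) - ∑ j, price g b j := by
  simp only [utility, sum_sub_distrib, sum_payment_eq_sum_price]

variable [DecidableEq α]

lemma sum_sub_sum_price_le_utility_update (hg : SelectsHighestBid g) (hb : ∀ i j, 0 ≤ b i j)
    {v : Finset α → ℝ} {w : α → ℝ} (hwv : ∀ Y, ∑ j ∈ Y, w j ≤ v Y) {b' : α → ℝ}
    (hb'0 : ∀ j, 0 ≤ b' j) (hb'w : ∀ j, b' j ≤ w j - b' j) (i : ι) (S : Finset α) :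
    ∑ j ∈ S, b' j - ∑ j ∈ S, price g b j ≤ utility v g (update b i b') i := by
  set X' := wonItems g (update b i b') i
  have hlost : ∀ j ∈ S, j ∉ X' → b' j ≤ price g b j := fun j _ hj =>
    hg.le_price_of_update (i := i) hb hb'0 fun h => hj (by simp [X', wonItems, h])
  calc ∑ j ∈ S, b' j - ∑ j ∈ S, price g b j ≤ ∑ j ∈ X', b' j := sub_le_iff_le_add.2 <|
        sum_le_sum_add_sum_of_forall_notMem_le (fun j _ => hb'0 j) (fun j _ => hb _ j) hlost
    _ ≤ ∑ j ∈ X', (w j - b' j) := sum_le_sum fun j _ => hb'w j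
    _ ≤ utility v g (update b i b') i := by
        rw [sum_sub_distrib, utility, update_self]
        linarith [hwv X']

lemma half_value_sub_sum_price_le_utility (hg : SelectsHighestBid g)
    (hb : ∀ i j, 0 ≤ b i j) {v : Finset α → ℝ} (hv : IsXOS v) {i : ι}
    (hNash : ∀ b' : α → ℝ, (∀ j, 0 ≤ b' j) → utility v g (update b i b') i ≤ utility v g b i)
    (S : Finset α) :
    v S / 2 - ∑ j ∈ S, price g b j ≤ utility v g b i := by
  obtain ⟨w, hw0, hwS, hwv⟩ := hv.exists_supporting S
  set b' : α → ℝ := fun j => if j ∈ S then w j / 2 else 0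
  have hb'0 : ∀ j, 0 ≤ b' j := fun j => by
    simp only [b']; split_ifs <;> linarith [hw0 j]
  have hb'w : ∀ j, b' j ≤ w j - b' j := fun j => by
    simp only [b']; split_ifs <;> linarith [hw0 j]
  have hb'S : ∑ j ∈ S, b' j = v S / 2 := by
    rw [hwS, sum_div]
    exact sum_congr rfl fun j hj => if_pos hj
  calc v S / 2 - ∑ j ∈ S, price g b j ≤ utility v g (update b i b') i :=
        hb'S ▸ sum_sub_sum_price_le_utility_update hg hb hwv hb'0 hb'w i S
    _ ≤ utility v g b i := hNash b' hb'0

lemma half_sum_value_le_welfare [Fintype ι] (hg : SelectsHighestBid g)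
    (hb : ∀ i j, 0 ≤ b i j) {v : ι → Finset α → ℝ} (hv : ∀ i, IsXOS (v i))
    (hNash : ∀ i, ∀ b' : α → ℝ, (∀ j, 0 ≤ b' j) →
      utility (v i) g (update b i b') i ≤ utility (v i) g b i)
    {S : ι → Finset α} (hS : ∀ i i', i ≠ i' → Disjoint (S i) (S i')) :
    (∑ i, v i (S i)) / 2 ≤ ∑ i, v i (wonItems g b i) := by
  have hsum := sum_le_sum fun i (_ : i ∈ univ) =>
    half_value_sub_sum_price_le_utility hg hb (hv i) (hNash i) (S i)
  rw [sum_sub_distrib, sum_utility_eq, ← sum_div] at hsum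
  linarith [sum_sum_le_sum_of_pairwise_disjoint (s := univ) (f := price g b) hS fun j => hb _ j]

end FirstPrice

/-- **Price of anarchy of simultaneous first-price item auctions with XOS bidders.**
There are `n` players and `m` items; each player `i` has an XOS valuation `v i`.
`g` is a selection rule assigning, for each nonnegative bid matrix, each item to a
player with a maximum bid on it; the winner of each item pays her bid, so player
`i`'s utility is `v_i(X_i(b)) − Σ_{j ∈ X_i(b)} b_{ij}` where
`X_i(b) = {j : g b j = i}`.  If the nonnegative bid matrix `b` is a pure Nash
equilibrium, then the welfare is at least `1/3` of the welfare of every partition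
of the items among the players (hence at least `1/3` of the optimal welfare). -/
theorem simultaneous_first_price_poa
    (n m : ℕ)
    (v : Fin n → Finset (Fin m) → ℝ) (hv : ∀ i, IsXOS (v i))
    (g : (Fin n → Fin m → ℝ) → Fin m → Fin n)
    (hg : ∀ b : Fin n → Fin m → ℝ, (∀ i j, 0 ≤ b i j) →
      ∀ j i, b i j ≤ b (g b j) j)
    (b : Fin n → Fin m → ℝ) (hb : ∀ i j, 0 ≤ b i j)
    (hNash : ∀ i : Fin n, ∀ b' : Fin m → ℝ, (∀ j, 0 ≤ b' j) →
      (v i (Finset.univ.filter (fun j => g b j = i)) -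
          ∑ j ∈ Finset.univ.filter (fun j => g b j = i), b i j) ≥
        (v i (Finset.univ.filter (fun j => g (Function.update b i b') j = i)) -
          ∑ j ∈ Finset.univ.filter (fun j => g (Function.update b i b') j = i), b' j)) :
    ∀ S : Fin n → Finset (Fin m),
      (∀ i i', i ≠ i' → Disjoint (S i) (S i')) →
      (Finset.univ.biUnion S = Finset.univ) →
      (∑ i, v i (Finset.univ.filter (fun j => g b j = i))) ≥
        (1/3) * ∑ i, v i (S i) := by
  intro S hS _
  have hNash' : ∀ i, ∀ b' : Fin m → ℝ, (∀ j, 0 ≤ b' j) →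
      utility (v i) g (update b i b') i ≤ utility (v i) g b i := by
    simpa only [utility, wonItems, update_self, ge_iff_le] using hNash
  have hhalf := half_sum_value_le_welfare hg hb hv hNash' hS
  have hnonneg : 0 ≤ ∑ i, v i (S i) := sum_nonneg fun i _ => (hv i).nonneg (S i)
  simp only [wonItems] at hhalf
  linarith
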